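/- arXiv:0906.1859 — 3 statements merged into one kernel-verified Lean document; each statement's English description precedes it below -/
import Mathlib

section
/- For the three-parameter logistic model with fixed a > 0 and c ∈ [0,1), the Fisher information I(θ|a,b,c) = (1-c)a²e^{2a(θ-b)}/([c+e^{a(θ-b)}][1+e^{a(θ-b)}]²), viewed as a function of b, attains its maximum at b = θ - (1/a)·log((1+√(1+8c))/2). -/
/-!
Writing `x = e^{a(θ-b)}`, the information is `(1-c)a²·x²/((c+x)(1+x)²)`, and `b ↦ x` is a bijection
onto `(0, ∞)`. The logarithmic derivative of `x²/((c+x)(1+x)²)` vanishes exactly when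
`x² = x + 2c`, whose positive root is `m = (1+√(1+8c))/2`; maximality at `m` is the identity
`m²(c+x)(1+x)² - x²(c+m)(1+m)² = (x-m)²(m²x+c)`, valid whenever `m² = m + 2c`.
-/

open Real

/-- The Fisher information of the 3-PL model divided by `(1-c)a²`, in the variable
`x = e^{a(θ-b)}`. -/
noncomputable def threePLKernel (c x : ℝ) : ℝ := x ^ 2 / ((c + x) * (1 + x) ^ 2)

lemma threePLKernel_le_of_sq_eq {c m x : ℝ} (hc : 0 ≤ c) (hm : 0 < m) (hx : 0 < x)
    (hmc : m ^ 2 = m + 2 * c) : threePLKernel c x ≤ threePLKernel c m := by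
  unfold threePLKernel
  have hgap : m ^ 2 * ((c + x) * (1 + x) ^ 2) - x ^ 2 * ((c + m) * (1 + m) ^ 2)
      = (x - m) ^ 2 * (m ^ 2 * x + c) := by
    linear_combination ((m + 1) * (x ^ 2 - m * x)) * hmc
  rw [div_le_div_iff₀ (by positivity) (by positivity)]
  nlinarith [mul_nonneg (sq_nonneg (x - m)) (by positivity : 0 ≤ m ^ 2 * x + c)]

lemma one_add_sqrt_div_two_sq {c : ℝ} (hc : 0 ≤ 1 + 8 * c) :
    ((1 + √(1 + 8 * c)) / 2) ^ 2 = (1 + √(1 + 8 * c)) / 2 + 2 * c := by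
  linear_combination (1 / 4 : ℝ) * sq_sqrt hc

lemma threePL_info_eq (θ a b c : ℝ) :
    (1 - c) * a ^ 2 * exp (2 * (a * (θ - b))) /
        ((c + exp (a * (θ - b))) * (1 + exp (a * (θ - b))) ^ 2) =
      (1 - c) * a ^ 2 * threePLKernel c (exp (a * (θ - b))) := by
  rw [threePLKernel, mul_comm 2, exp_mul, rpow_two, mul_div_assoc]

lemma exp_mul_sub_sub_log {a θ m : ℝ} (ha : a ≠ 0) (hm : 0 < m) :
    exp (a * (θ - (θ - (1 / a) * log m))) = m := by
  rw [sub_sub_cancel, ← mul_assoc, mul_one_div_cancel ha, one_mul, exp_log hm]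

/-- For the 3-PL model with fixed `a > 0` and `c ∈ [0,1)`, the Fisher information as a
function of `b` attains its maximum at `b = θ - (1/a)·log((1+√(1+8c))/2)`. -/
theorem threePL_info_max (θ a c : ℝ) (ha : 0 < a) (hc0 : 0 ≤ c) (hc1 : c < 1) :
    ∀ b : ℝ,
      (1 - c) * a ^ 2 * Real.exp (2 * (a * (θ - b))) /
        ((c + Real.exp (a * (θ - b))) * (1 + Real.exp (a * (θ - b))) ^ 2) ≤
      (1 - c) * a ^ 2 *
          Real.exp (2 * (a * (θ - (θ - (1 / a) * Real.log ((1 + Real.sqrt (1 + 8 * c)) / 2))))) /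
        ((c + Real.exp (a * (θ - (θ - (1 / a) * Real.log ((1 + Real.sqrt (1 + 8 * c)) / 2))))) *
          (1 + Real.exp (a * (θ - (θ - (1 / a) * Real.log ((1 + Real.sqrt (1 + 8 * c)) / 2))))) ^ 2) := by
  intro b
  have hm : 0 < (1 + √(1 + 8 * c)) / 2 := by positivity
  rw [threePL_info_eq, threePL_info_eq, exp_mul_sub_sub_log ha.ne' hm]
  have hscale : 0 ≤ (1 - c) * a ^ 2 := mul_nonneg (by linarith) (sq_nonneg a)
  exact mul_le_mul_of_nonneg_left
    (threePLKernel_le_of_sq_eq hc0 hm (exp_pos _) (one_add_sqrt_div_two_sq (by linarith))) hscale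
end

section
/- Let G(t) = e^t/(1+e^t). For fixed θ and a ∈ [m,M] (0 < m ≤ M), there exist constants 0 < C₁ ≤ C₂ < ∞ depending only on m, M, δ₀ such that for all b ≤ θ + δ₀/m and all θ̂ ≥ θ + 1: C₁·G(a(θ-b))(1-G(a(θ-b))) ≤ G(a(θ̂-b)) - G(a(θ-b)) ≤ C₂·G(a(θ-b))(1-G(a(θ-b)))·e^{a(θ̂-θ)}. -/
/-!
Writing `σ` for the logistic function, `σ(x + d) - σ(x) = (e^d - 1) σ(x) σ(-(x + d))`, while the
Fisher factor is `σ(x)(1 - σ(x)) = σ(x) σ(-x)`. For `d ≥ 0` the factor `σ(-(x + d))` lies between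
`e^{-d} σ(-x)` and `σ(-x)`, so the gap lies between `(1 - e^{-d})` and `e^d` times the Fisher
factor. With `x = a(θ - b)` and `d = a(θ̂ - θ) ≥ m` this gives `C₁ = 1 - e^{-m}` and `C₂ = 1`.
-/

namespace Real

lemma sigmoid_eq_exp_div (x : ℝ) : sigmoid x = exp x / (1 + exp x) := by
  rw [sigmoid_def, exp_neg]
  field_simp
  ring

lemma sigmoid_add_sub_sigmoid (x d : ℝ) :
    sigmoid (x + d) - sigmoid x = (exp d - 1) * sigmoid x * sigmoid (-(x + d)) := by
  simp only [sigmoid_eq_exp_div, exp_neg, exp_add]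
  field_simp
  ring

lemma exp_neg_mul_sigmoid_le_sigmoid_sub (y : ℝ) {d : ℝ} (hd : 0 ≤ d) :
    exp (-d) * sigmoid y ≤ sigmoid (y - d) := by
  have hexp : exp (-d) ≤ 1 := exp_le_one_iff.2 (neg_nonpos.2 hd)
  rw [sigmoid_eq_exp_div, sigmoid_eq_exp_div, sub_eq_add_neg, exp_add, mul_div_assoc', mul_comm]
  gcongr
  exact mul_le_of_le_one_right (exp_pos y).le hexp

lemma one_sub_exp_neg_mul_le_sigmoid_add_sub (x : ℝ) {d : ℝ} (hd : 0 ≤ d) :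
    (1 - exp (-d)) * (sigmoid x * (1 - sigmoid x)) ≤ sigmoid (x + d) - sigmoid x := by
  have hσ : exp (-d) * sigmoid (-x) ≤ sigmoid (-(x + d)) := by
    simpa [sub_eq_add_neg, add_comm] using exp_neg_mul_sigmoid_le_sigmoid_sub (-x) hd
  rw [sigmoid_add_sub_sigmoid, ← sigmoid_neg, show 1 - exp (-d) = (exp d - 1) * exp (-d) by
    rw [sub_mul, one_mul, ← exp_add, add_neg_cancel, exp_zero]]
  have := mul_le_mul_of_nonneg_left hσ
    (mul_nonneg (sub_nonneg.2 (one_le_exp hd)) (sigmoid_nonneg x))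
  linarith

lemma sigmoid_add_sub_le (x : ℝ) {d : ℝ} (hd : 0 ≤ d) :
    sigmoid (x + d) - sigmoid x ≤ sigmoid x * (1 - sigmoid x) * exp d := by
  have hσ : sigmoid (-(x + d)) ≤ sigmoid (-x) := sigmoid_le (by linarith)
  rw [sigmoid_add_sub_sigmoid, ← sigmoid_neg]
  have := mul_le_mul (sub_le_self (exp d) zero_le_one) hσ (sigmoid_nonneg _) (exp_pos d).le
  nlinarith [sigmoid_pos x]

end Real

theorem logistic_gap_same_order_general (m M δ₀ : ℝ) (hm : 0 < m) :
    ∃ C₁ C₂ : ℝ, 0 < C₁ ∧ C₁ ≤ C₂ ∧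
      ∀ θ a b θhat : ℝ, a ∈ Set.Icc m M → b ≤ θ + δ₀ / m → θ + 1 ≤ θhat →
        C₁ * ((Real.exp (a * (θ - b)) / (1 + Real.exp (a * (θ - b)))) *
            (1 - Real.exp (a * (θ - b)) / (1 + Real.exp (a * (θ - b))))) ≤
          Real.exp (a * (θhat - b)) / (1 + Real.exp (a * (θhat - b))) -
            Real.exp (a * (θ - b)) / (1 + Real.exp (a * (θ - b))) ∧
        Real.exp (a * (θhat - b)) / (1 + Real.exp (a * (θhat - b))) -
            Real.exp (a * (θ - b)) / (1 + Real.exp (a * (θ - b))) ≤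
          C₂ * ((Real.exp (a * (θ - b)) / (1 + Real.exp (a * (θ - b)))) *
              (1 - Real.exp (a * (θ - b)) / (1 + Real.exp (a * (θ - b))))) *
            Real.exp (a * (θhat - θ)) := by
  refine ⟨1 - Real.exp (-m), 1, sub_pos.2 (Real.exp_lt_one_iff.2 (neg_lt_zero.2 hm)),
    sub_le_self _ (Real.exp_pos _).le, fun θ a b θhat ⟨ham, _⟩ _ hθ ↦ ?_⟩
  have hd : m ≤ a * (θhat - θ) := by nlinarith
  have hsplit : a * (θhat - b) = a * (θ - b) + a * (θhat - θ) := by ring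
  simp only [← Real.sigmoid_eq_exp_div, hsplit, one_mul]
  refine ⟨le_trans ?_ (Real.one_sub_exp_neg_mul_le_sigmoid_add_sub _ (by linarith)),
    Real.sigmoid_add_sub_le _ (by linarith)⟩
  gcongr
  exact mul_nonneg (Real.sigmoid_nonneg _) (sub_nonneg.2 (Real.sigmoid_le_one _))

/-- For `a ∈ [m,M]`, `b ≤ θ + δ₀/m`, `θ̂ ≥ θ + 1`, there are constants
`0 < C₁ ≤ C₂ < ∞` depending only on `m, M, δ₀` such that
`C₁·G(a(θ-b))(1-G(a(θ-b))) ≤ G(a(θ̂-b)) - G(a(θ-b)) ≤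
 C₂·G(a(θ-b))(1-G(a(θ-b)))·e^{a(θ̂-θ)}`, where `G(t) = e^t/(1+e^t)`. -/
theorem logistic_gap_same_order (m M δ₀ : ℝ) (hm : 0 < m) (hmM : m ≤ M) (hδ : 0 < δ₀) :
    ∃ C₁ C₂ : ℝ, 0 < C₁ ∧ C₁ ≤ C₂ ∧
      ∀ θ a b θhat : ℝ, a ∈ Set.Icc m M → b ≤ θ + δ₀ / m → θ + 1 ≤ θhat →
        C₁ * ((Real.exp (a * (θ - b)) / (1 + Real.exp (a * (θ - b)))) *
            (1 - Real.exp (a * (θ - b)) / (1 + Real.exp (a * (θ - b))))) ≤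
          Real.exp (a * (θhat - b)) / (1 + Real.exp (a * (θhat - b))) -
            Real.exp (a * (θ - b)) / (1 + Real.exp (a * (θ - b))) ∧
        Real.exp (a * (θhat - b)) / (1 + Real.exp (a * (θhat - b))) -
            Real.exp (a * (θ - b)) / (1 + Real.exp (a * (θ - b))) ≤
          C₂ * ((Real.exp (a * (θ - b)) / (1 + Real.exp (a * (θ - b)))) *
              (1 - Real.exp (a * (θ - b)) / (1 + Real.exp (a * (θ - b))))) *
            Real.exp (a * (θhat - θ)) :=
  logistic_gap_same_order_general m M δ₀ hm
end

section
/- Let θ̂₀ < θ - 1 - π²/6, ε₀ > 0, and n₀ ∈ ℕ satisfy: (i) Σ_{k=n₀+1}^∞ k³/(1+e^k) < 1/3, (ii) (n₀+1)³/(1+e^{(n₀+1)³ε₀}) < 1/6, (iii) 3(n₀+1)³ < Σ_{k=1}^{n₀} k³. Set θ̂_k = θ̂₀ - kε₀ for 1 ≤ k ≤ n₀ and b_k = θ̂_{k-1}, a_k = k³. If θ̂_{n₀+1} solves Σ_{k=1}^{n₀+1} a_k(Y_k - G(a_k(θ̂-b_k))) = 0 with Y_k = 0 for k ≤ n₀ and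 Y_{n₀+1} = 1, then θ̂_{n₀+1} ≤ θ̂₀. -/
/-!
Suppose `θ̂_{n₀+1} > θ̂₀`. The design points `b_k = θ̂_{k-1}` satisfy `b_k ≤ θ̂₀`, so every argument
`a_k (θ̂_{n₀+1} - b_k)` with `k ≤ n₀` is nonnegative and the corresponding logistic probability is
at least `1/2`. The likelihood equation then balances `(1/2) ∑_{k ≤ n₀} k³` against a single term of
size at most `(n₀+1)³`, contradicting `3 (n₀+1)³ < ∑_{k ≤ n₀} k³`.
-/

open Finset Real

lemma Real.exp_div_one_add_exp (x : ℝ) : exp x / (1 + exp x) = sigmoid x := by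
  rw [sigmoid_def, exp_neg]
  field_simp
  ring

lemma Real.inv_two_le_sigmoid {x : ℝ} (hx : 0 ≤ x) : 2⁻¹ ≤ sigmoid x :=
  sigmoid_zero ▸ sigmoid_le hx

/-- The logistic score equation for responses `0, …, 0, 1`. -/
lemma sum_Icc_le_two_mul_of_logistic_score_eq_zero {n : ℕ} {a x : ℕ → ℝ}
    (ha : ∀ k ∈ Icc 1 n, 0 ≤ a k) (hx : ∀ k ∈ Icc 1 n, 0 ≤ x k)
    (h : ∑ k ∈ Icc 1 (n + 1), a k * ((if k = n + 1 then 1 else 0) - sigmoid (x k)) = 0) :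
    ∑ k ∈ Icc 1 n, a k ≤ 2 * a (n + 1) := by
  rw [sum_Icc_succ_top (Nat.le_add_left 1 n), if_pos rfl] at h
  have hzero : ∑ k ∈ Icc 1 n, a k * ((if k = n + 1 then 1 else 0) - sigmoid (x k)) =
      -∑ k ∈ Icc 1 n, a k * sigmoid (x k) := by
    rw [← sum_neg_distrib]
    refine sum_congr rfl fun k hk ↦ ?_
    rw [if_neg (by simp at hk; omega)]
    ring
  have hhalf : ∑ k ∈ Icc 1 n, a k / 2 ≤ ∑ k ∈ Icc 1 n, a k * sigmoid (x k) :=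
    sum_le_sum fun k hk ↦ by
      have := mul_le_mul_of_nonneg_left (inv_two_le_sigmoid (hx k hk)) (ha k hk)
      linarith
  rw [← sum_div] at hhalf
  have hsum : 0 ≤ ∑ k ∈ Icc 1 n, a k := sum_nonneg ha
  -- the equation forces `0 ≤ a (n + 1)`, so `a (n + 1) * (1 - sigmoid _) ≤ a (n + 1)`
  nlinarith [sigmoid_pos (x (n + 1)), sigmoid_lt_one (x (n + 1))]

lemma le_apply_zero_of_eq_sub_mul {θ : ℕ → ℝ} {ε : ℝ} {n j : ℕ} (hε : 0 ≤ ε)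
    (hdec : ∀ k, 1 ≤ k → k ≤ n → θ k = θ 0 - k * ε) (hj : j ≤ n) : θ j ≤ θ 0 := by
  rcases Nat.eq_zero_or_pos j with rfl | hj₀
  · rfl
  · rw [hdec j hj₀ hj]
    nlinarith [(Nat.cast_nonneg j : (0 : ℝ) ≤ j)]

theorem example1_first_step_general (ε₀ : ℝ) (n₀ : ℕ) (θhat : ℕ → ℝ)
    (hε : 0 < ε₀)
    (hdec : ∀ k, 1 ≤ k → k ≤ n₀ → θhat k = θhat 0 - k * ε₀)
    (h38 : 3 * ((n₀ : ℝ) + 1) ^ 3 < ∑ k ∈ Finset.Icc 1 n₀, (k : ℝ) ^ 3)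
    (hml : ∑ k ∈ Finset.Icc 1 (n₀ + 1),
        (k : ℝ) ^ 3 * ((if k = n₀ + 1 then (1 : ℝ) else 0) -
          Real.exp ((k : ℝ) ^ 3 * (θhat (n₀ + 1) - θhat (k - 1))) /
            (1 + Real.exp ((k : ℝ) ^ 3 * (θhat (n₀ + 1) - θhat (k - 1))))) = 0) :
    θhat (n₀ + 1) ≤ θhat 0 := by
  by_contra! hgt
  have hx : ∀ k ∈ Icc 1 n₀, 0 ≤ (k : ℝ) ^ 3 * (θhat (n₀ + 1) - θhat (k - 1)) := fun k hk ↦ by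
    have hb : θhat (k - 1) ≤ θhat 0 :=
      le_apply_zero_of_eq_sub_mul hε.le hdec (by simp at hk; omega)
    exact mul_nonneg (by positivity) (by linarith)
  simp only [exp_div_one_add_exp] at hml
  have := sum_Icc_le_two_mul_of_logistic_score_eq_zero (a := fun k ↦ (k : ℝ) ^ 3)
    (fun k _ ↦ by positivity) hx hml
  push_cast at this
  linarith [pow_pos (n₀.cast_add_one_pos (α := ℝ)) 3]

/-- First step of the inconsistency counterexample (Example 1): under the adaptive
2-PL design with `a_k = k³`, `b_k = θ̂_{k-1}`, initial estimators decreasing by `ε₀`,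
responses `Y_k = 0` for `k ≤ n₀` and `Y_{n₀+1} = 1`, any solution `θ̂_{n₀+1}` of the
likelihood equation satisfies `θ̂_{n₀+1} ≤ θ̂₀`. -/
theorem example1_first_step (θ ε₀ : ℝ) (n₀ : ℕ) (θhat : ℕ → ℝ)
    (hε : 0 < ε₀) (hinit : θhat 0 < θ - 1 - Real.pi ^ 2 / 6)
    (hdec : ∀ k, 1 ≤ k → k ≤ n₀ → θhat k = θhat 0 - k * ε₀)
    (h36 : ∑' k : ℕ, ((n₀ + 1 + k : ℝ) ^ 3 / (1 + Real.exp (n₀ + 1 + k))) < 1 / 3)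
    (h37 : ((n₀ : ℝ) + 1) ^ 3 / (1 + Real.exp (((n₀ : ℝ) + 1) ^ 3 * ε₀)) < 1 / 6)
    (h38 : 3 * ((n₀ : ℝ) + 1) ^ 3 < ∑ k ∈ Finset.Icc 1 n₀, (k : ℝ) ^ 3)
    (hml : ∑ k ∈ Finset.Icc 1 (n₀ + 1),
        (k : ℝ) ^ 3 * ((if k = n₀ + 1 then (1 : ℝ) else 0) -
          Real.exp ((k : ℝ) ^ 3 * (θhat (n₀ + 1) - θhat (k - 1))) /
            (1 + Real.exp ((k : ℝ) ^ 3 * (θhat (n₀ + 1) - θhat (k - 1))))) = 0) :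
    θhat (n₀ + 1) ≤ θhat 0 :=
  example1_first_step_general ε₀ n₀ θhat hε hdec h38 hml
end
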